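/- For every ρ ∈ (0,1] there exists ξ0 > 0 such that for every ξ ∈ (0, ξ0] there exists m0 ∈ ℕ with the following property: if m ≥ m0 is even and G is an m-vertex graph that is upper (ρ, ξ)-regular and every vertex v of G satisfies d_G(v) ≥ 3ρm/4, then G has a perfect matching. -/

import Mathlib

open Finset

/-- The number of edges of a graph `G` between two (disjoint) vertex sets `S` and `T`. -/
def edgesBetween {V : Type*} [DecidableEq V] (G : SimpleGraph V) [DecidableRel G.Adj]
    (S T : Finset V) : ℕ :=
  ((S ×ˢ T).filter fun p => G.Adj p.1 p.2).card

/-- A graph `G` on `m` vertices is *upper `(ρ, ξ)`-regular* if for all disjoint vertex sets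
`S, T` of size at least `ξm`, the number of edges between `S` and `T` is at most
`(ρ + ξ)|S||T|`. -/
def UpperRegular {m : ℕ} (G : SimpleGraph (Fin m)) [DecidableRel G.Adj] (ρ ξ : ℝ) : Prop :=
  ∀ S T : Finset (Fin m), Disjoint S T →
    ξ * m ≤ (S.card : ℝ) → ξ * m ≤ (T.card : ℝ) →
    (edgesBetween G S T : ℝ) ≤ (ρ + ξ) * S.card * T.card

/-!
By Tutte's theorem, a graph on an even number of vertices without a perfect matching has a set `K`
of vertices such that `G - K` has more than `|K|` odd components, hence at least `|K| + 2` by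
parity. All `≥ 3ρm/4` neighbours of a vertex of a component `P` lie in `P ∪ K`.

If some component has fewer than `ξm` vertices, `K` has almost `3ρm/4` vertices. Then all but
`1/ξ` of the components are small, and their union `Q` has at least `ξm` vertices, each with almost
`3ρm/4` neighbours in `K`. As `|K| ≤ m/2`, the density between `Q` and `K` is then almost `3ρ/2`,
against upper regularity.

If all components have at least `ξm` vertices, there are at most `1/ξ` of them, so `K` is tiny and
a component `P` with `|P| ≤ m/2` has internal degrees almost `3ρm/4 ≥ (3ρ/2)|P|`. Halving `P`
repeatedly, upper regularity bounds its internal density by `ρ + ξ` up to an error `2ξm/|P|`.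
-/

section Counting

variable {V : Type*} (G : SimpleGraph V) [DecidableRel G.Adj]

theorem card_filter_adj_lt {S : Finset V} {v : V} (hv : v ∈ S) : #{w ∈ S | G.Adj v w} < #S :=
  card_lt_card <| filter_ssubset.2 ⟨v, hv, G.irrefl⟩

variable [DecidableEq V]

theorem edgesBetween_eq_sum (S T : Finset V) :
    edgesBetween G S T = ∑ v ∈ S, #{w ∈ T | G.Adj v w} := by
  rw [edgesBetween, card_filter, sum_product]
  simp only [card_filter]

theorem edgesBetween_le_card_mul (S T : Finset V) : edgesBetween G S T ≤ #S * #T :=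
  (card_filter_le _ _).trans_eq (card_product S T)

theorem sum_card_filter_adj_union {A B : Finset V} (hAB : Disjoint A B) :
    ∑ v ∈ A ∪ B, #{w ∈ A ∪ B | G.Adj v w} =
      ∑ v ∈ A, #{w ∈ A | G.Adj v w} + ∑ v ∈ B, #{w ∈ B | G.Adj v w} +
        (edgesBetween G A B + edgesBetween G B A) := by
  have hsplit : ∀ v, #{w ∈ A ∪ B | G.Adj v w} = #{w ∈ A | G.Adj v w} + #{w ∈ B | G.Adj v w} :=
    fun v => by rw [filter_union, card_union_of_disjoint (disjoint_filter_filter hAB)]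
  simp only [hsplit, sum_union hAB, sum_add_distrib, edgesBetween_eq_sum]
  ring

end Counting

-- The left side is `2 e(S)`; both halves of `S` have at least `ξm` vertices while `|S| > 2ξm + 1`.
theorem UpperRegular.sum_card_filter_adj_le {m : ℕ} {G : SimpleGraph (Fin m)}
    [DecidableRel G.Adj] {ρ ξ : ℝ} (hG : UpperRegular G ρ ξ) (hρ : 0 ≤ ρ) (hξ : 0 ≤ ξ)
    (S : Finset (Fin m)) :
    (∑ v ∈ S, #{w ∈ S | G.Adj v w} : ℝ) ≤ (ρ + ξ) * #S ^ 2 + 2 * ξ * m * #S := by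
  induction S using Finset.strongInduction with
  | _ S ih =>
  by_cases hsmall : (#S : ℝ) ≤ 2 * ξ * m + 1
  · have hdeg : ∀ v ∈ S, (#{w ∈ S | G.Adj v w} : ℝ) ≤ #S - 1 := fun v hv => by
      have : (#{w ∈ S | G.Adj v w} : ℝ) + 1 ≤ #S := by exact_mod_cast card_filter_adj_lt G hv
      linarith
    calc (∑ v ∈ S, #{w ∈ S | G.Adj v w} : ℝ) ≤ ∑ v ∈ S, ((#S : ℝ) - 1) := sum_le_sum hdeg
      _ = #S * (#S - 1) := by simp [mul_sub]
      _ ≤ (ρ + ξ) * #S ^ 2 + 2 * ξ * m * #S := by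
          have : 0 ≤ (ρ + ξ) * #S ^ 2 := by positivity
          nlinarith [(#S).cast_nonneg (α := ℝ)]
  · push Not at hsmall
    obtain ⟨A, hAS, hA⟩ := exists_subset_card_eq (Nat.div_le_self #S 2)
    set B := S \ A
    have hAB : Disjoint A B := disjoint_sdiff
    have hS : A ∪ B = S := union_sdiff_of_subset hAS
    have hcard : (#A : ℝ) + #B = #S := by
      exact_mod_cast (card_union_of_disjoint hAB).symm.trans (congrArg card hS)
    have hA₁ : (#S : ℝ) ≤ 2 * #A + 1 := by
      rw [hA]; exact_mod_cast (by omega : #S ≤ 2 * (#S / 2) + 1)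
    have hA₂ : 2 * (#A : ℝ) ≤ #S := by rw [hA]; exact_mod_cast (by omega : 2 * (#S / 2) ≤ #S)
    have hS2 : 2 ≤ #S := by
      have : (1 : ℝ) < #S := by nlinarith [(m.cast_nonneg : (0 : ℝ) ≤ m)]
      exact_mod_cast this
    have hAlt : A ⊂ S := Finset.ssubset_iff_subset_ne.2 ⟨hAS, fun h => by rw [h] at hA; omega⟩
    have hBlt : B ⊂ S := sdiff_ssubset hAS (card_pos.1 (by omega))
    have hAB' := hG A B hAB (by linarith) (by linarith)
    have hBA := hG B A hAB.symm (by linarith) (by linarith)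
    have ihA := ih A hAlt
    have ihB := ih B hBlt
    have hsum : (∑ v ∈ S, #{w ∈ S | G.Adj v w} : ℝ) =
        ∑ v ∈ A, (#{w ∈ A | G.Adj v w} : ℝ) + ∑ v ∈ B, (#{w ∈ B | G.Adj v w} : ℝ) +
          (edgesBetween G A B + edgesBetween G B A) := by
      rw [← hS]; exact_mod_cast sum_card_filter_adj_union G hAB
    rw [hsum, ← hcard]
    linear_combination ihA + ihB + hAB' + hBA

namespace SimpleGraph

variable {V : Type*} [DecidableEq V]

-- The odd components of `G - K` in Tutte's theorem, with only the properties the counting uses.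
structure TutteBarrier (G : SimpleGraph V) (K : Finset V) (C : Finset (Finset V)) : Prop where
  pairwiseDisjoint : (C : Set (Finset V)).PairwiseDisjoint id
  nonempty : ∀ P ∈ C, P.Nonempty
  disjoint : ∀ P ∈ C, Disjoint P K
  mem_of_adj : ∀ P ∈ C, ∀ v ∈ P, ∀ w, G.Adj v w → w ∈ P ∪ K
  card_add_two_le : #K + 2 ≤ #C

theorem exists_tutteBarrier [Fintype V] {G : SimpleGraph V}
    (hG : ∀ M : G.Subgraph, ¬ M.IsPerfectMatching) (hV : Even (Fintype.card V)) :
    ∃ K C, G.TutteBarrier K C := by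
  classical
  obtain ⟨u, hu⟩ := exists_isTutteViolator hG (by rwa [Nat.card_eq_fintype_card])
  set H := ((⊤ : G.Subgraph).deleteVerts u).coe
  let part (c : H.ConnectedComponent) : Finset V :=
    c.supp.toFinset.map (Function.Embedding.subtype _)
  have mem_part {c : H.ConnectedComponent} {v : V} :
      v ∈ part c ↔ ∃ h : v ∉ u, H.connectedComponentMk ⟨v, trivial, h⟩ = c := by
    simp [part, ConnectedComponent.mem_supp_iff]
  have part_injective : Function.Injective part := by
    intro c d hcd
    obtain ⟨⟨v, hv⟩, rfl⟩ := c.nonempty_supp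
    obtain ⟨_, rfl⟩ := mem_part.1 (hcd ▸ mem_part.2 ⟨hv.2, rfl⟩)
    rfl
  have hodd : u.ncard + 2 ≤ H.oddComponents.ncard := by
    have hverts : ((⊤ : G.Subgraph).deleteVerts u).verts.ncard = Fintype.card V - u.ncard := by
      rw [Subgraph.deleteVerts_verts, Subgraph.verts_top, Set.ncard_sdiff (Set.subset_univ u),
        Set.ncard_univ, Nat.card_eq_fintype_card]
    have hpar := (odd_ncard_oddComponents (G := H)).not
    rw [Nat.card_coe_set_eq, hverts] at hpar
    have hle : u.ncard ≤ Fintype.card V := by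
      rw [← Nat.card_eq_fintype_card]; exact Set.ncard_le_card u
    have hlt : u.ncard < H.oddComponents.ncard := hu
    simp only [Nat.not_odd_iff_even, Nat.even_sub hle, Nat.even_iff] at hpar hV
    omega
  refine ⟨u.toFinset, H.oddComponents.toFinset.image part, ⟨?_, ?_, ?_, ?_, ?_⟩⟩
  · simp only [coe_image, Set.coe_toFinset]
    rintro _ ⟨c, -, rfl⟩ _ ⟨d, -, rfl⟩ hcd
    refine Finset.disjoint_left.2 fun v hvc hvd => hcd ?_
    obtain ⟨_, rfl⟩ := mem_part.1 hvc
    obtain ⟨_, rfl⟩ := mem_part.1 hvd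
    rfl
  · simp only [mem_image]
    rintro _ ⟨c, -, rfl⟩
    obtain ⟨⟨v, hv⟩, rfl⟩ := c.nonempty_supp
    exact ⟨v, mem_part.2 ⟨hv.2, rfl⟩⟩
  · simp only [mem_image]
    rintro _ ⟨c, -, rfl⟩
    refine Finset.disjoint_left.2 fun v hv => ?_
    obtain ⟨hvu, -⟩ := mem_part.1 hv
    simpa using hvu
  · simp only [mem_image]
    rintro _ ⟨c, -, rfl⟩ v hv w hvw
    obtain ⟨hvu, rfl⟩ := mem_part.1 hv
    by_cases hwu : w ∈ u
    · exact mem_union_right _ (Set.mem_toFinset.2 hwu)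
    · refine mem_union_left _ (mem_part.2 ⟨hwu, ?_⟩)
      exact ConnectedComponent.connectedComponentMk_eq_of_adj
        (by simpa [H] using ⟨hwu, hvu, hvw.symm⟩)
  · simpa [card_image_of_injective _ part_injective, Set.ncard_eq_toFinset_card'] using hodd

namespace TutteBarrier

variable [Fintype V] {G : SimpleGraph V} {K : Finset V} {C : Finset (Finset V)}

theorem sum_card_add_card_le (hKC : G.TutteBarrier K C) :
    ∑ P ∈ C, #P + #K ≤ Fintype.card V := by
  have hunion : #(C.biUnion id ∪ K) = ∑ P ∈ C, #P + #K := by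
    rw [card_union_of_disjoint ((disjoint_biUnion_left C id K).2 hKC.disjoint),
      card_biUnion hKC.pairwiseDisjoint]
    rfl
  exact hunion ▸ card_le_univ _

theorem two_mul_card_add_two_le (hKC : G.TutteBarrier K C) : 2 * #K + 2 ≤ Fintype.card V := by
  have hC : #C ≤ ∑ P ∈ C, #P := by
    rw [card_eq_sum_ones]
    exact sum_le_sum fun P hP => (hKC.nonempty P hP).card_pos
  have := hKC.sum_card_add_card_le
  have := hKC.card_add_two_le
  omega

theorem card_mul_le (hKC : G.TutteBarrier K C) {D : Finset (Finset V)} (hD : D ⊆ C) {t : ℝ}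
    (ht : ∀ P ∈ D, t ≤ #P) : #D * t ≤ Fintype.card V := by
  have hsum : ∑ P ∈ D, #P ≤ ∑ P ∈ C, #P := sum_le_sum_of_subset hD
  have hC := hKC.sum_card_add_card_le
  calc #D * t ≤ ∑ P ∈ D, (#P : ℝ) := by simpa using card_nsmul_le_sum D (fun P => (#P : ℝ)) t ht
    _ ≤ Fintype.card V := by exact_mod_cast (show ∑ P ∈ D, #P ≤ Fintype.card V by omega)

theorem exists_two_mul_card_le (hKC : G.TutteBarrier K C) :
    ∃ P ∈ C, 2 * #P ≤ Fintype.card V := by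
  have := hKC.card_add_two_le
  obtain ⟨P, hP, Q, hQ, hPQ⟩ := one_lt_card.1 (show 1 < #C by omega)
  have hsum : #P + #Q ≤ ∑ R ∈ C, #R := by
    rw [← sum_pair hPQ]
    exact sum_le_sum_of_subset (insert_subset hP (singleton_subset_iff.2 hQ))
  have := hKC.sum_card_add_card_le
  by_cases h : #P ≤ #Q
  · exact ⟨P, hP, by omega⟩
  · exact ⟨Q, hQ, by omega⟩

theorem degree_le [DecidableRel G.Adj] (hKC : G.TutteBarrier K C) {P : Finset V} (hP : P ∈ C)
    {v : V} (hv : v ∈ P) : G.degree v ≤ #{w ∈ P | G.Adj v w} + #{w ∈ K | G.Adj v w} := by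
  rw [← card_neighborFinset_eq_degree]
  refine (card_le_card fun w hw => ?_).trans (card_union_le _ _)
  rw [mem_neighborFinset] at hw
  rw [← filter_union, mem_filter]
  exact ⟨hKC.mem_of_adj P hP v hv w hw, hw⟩

end TutteBarrier

end SimpleGraph

namespace SimpleGraph.TutteBarrier

variable {m : ℕ} {G : SimpleGraph (Fin m)} [DecidableRel G.Adj] {K : Finset (Fin m)}
  {C : Finset (Finset (Fin m))} {ρ ξ : ℝ}

theorem le_card_filter_adj (hKC : G.TutteBarrier K C)
    (hdeg : ∀ v, 3 * ρ * m / 4 ≤ (G.degree v : ℝ))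
    {P : Finset (Fin m)} (hP : P ∈ C) {v : Fin m} (hv : v ∈ P) :
    3 * ρ * m / 4 ≤ (#{w ∈ P | G.Adj v w} : ℝ) + #{w ∈ K | G.Adj v w} :=
  (hdeg v).trans (by exact_mod_cast hKC.degree_le hP hv)

theorem not_upperRegular_of_card_lt (hKC : G.TutteBarrier K C)
    (hdeg : ∀ v, 3 * ρ * m / 4 ≤ (G.degree v : ℝ)) (hξ : 0 < ξ) (hξρ : 40 * ξ ≤ ρ)
    (hm : 8 ≤ ρ * ξ * m) {P₀ : Finset (Fin m)} (hP₀ : P₀ ∈ C) (hP₀small : #P₀ < ξ * m) :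
    ¬ UpperRegular G ρ ξ := by
  intro hG
  have hρ : 0 < ρ := by linarith
  have hm0 : (0 : ℝ) < m := pos_of_mul_pos_right (by linarith) (mul_pos hρ hξ).le
  have hsmall_adj : ∀ P ∈ C, (#P : ℝ) < ξ * m → ∀ v ∈ P,
      3 * ρ * m / 4 - ξ * m ≤ #{w ∈ K | G.Adj v w} := by
    intro P hP hPsmall v hv
    have := hKC.le_card_filter_adj hdeg hP hv
    have : (#{w ∈ P | G.Adj v w} : ℝ) ≤ #P := by exact_mod_cast card_filter_le _ _
    linarith
  obtain ⟨v₀, hv₀⟩ := hKC.nonempty P₀ hP₀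
  have hK : 3 * ρ * m / 4 - ξ * m ≤ #K :=
    (hsmall_adj P₀ hP₀ hP₀small v₀ hv₀).trans (by exact_mod_cast card_filter_le _ _)
  set small := {P ∈ C | (#P : ℝ) < ξ * m}
  set large := {P ∈ C | ¬ (#P : ℝ) < ξ * m}
  set Q := small.biUnion id
  have hlarge : (#large : ℝ) * (ξ * m) ≤ m := by
    simpa using hKC.card_mul_le (filter_subset _ C) (t := ξ * m) fun P hP => by
      simpa using (mem_filter.1 hP).2
  have hcount : #K + 2 ≤ #small + #large := by
    rw [card_filter_add_card_filter_not]; exact hKC.card_add_two_le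
  have hQ : #small ≤ #Q := card_le_card_biUnion
    (hKC.pairwiseDisjoint.subset (coe_subset.2 (filter_subset _ C)))
    fun P hP => hKC.nonempty P (mem_filter.1 hP).1
  have hQK : Disjoint Q K :=
    (disjoint_biUnion_left _ _ _).2 fun P hP => hKC.disjoint P (mem_filter.1 hP).1
  have hKm : (2 * #K + 2 : ℝ) ≤ m := by
    exact_mod_cast Fintype.card_fin m ▸ hKC.two_mul_card_add_two_le
  have hQbig : ξ * m ≤ #Q := by
    have h₁ : (#K + 2 : ℝ) ≤ #small + #large := by exact_mod_cast hcount
    have h₂ : (#small : ℝ) ≤ #Q := by exact_mod_cast hQ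
    have h₃ : ξ * #large ≤ 1 := le_of_mul_le_mul_right (by linarith) hm0
    have h₄ : ξ * (ξ * m) ≤ ρ * ξ * m / 40 := by nlinarith
    refine le_of_mul_le_mul_left ?_ hξ
    nlinarith
  have hKbig : ξ * m ≤ #K := by nlinarith
  have hlow : #Q * (3 * ρ * m / 4 - ξ * m) ≤ (edgesBetween G Q K : ℝ) := by
    rw [edgesBetween_eq_sum]
    push_cast
    simpa using card_nsmul_le_sum Q (fun v => (#{w ∈ K | G.Adj v w} : ℝ)) _ fun v hv => by
      obtain ⟨P, hP, hvP⟩ := mem_biUnion.1 hv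
      exact hsmall_adj P (mem_filter.1 hP).1 (mem_filter.1 hP).2 v hvP
  have hup := hG Q K hQK hQbig hKbig
  have hQpos : (0 : ℝ) < #Q := (mul_pos hξ hm0).trans_le hQbig
  have : (ρ + ξ) * #Q * #K ≤ #Q * ((ρ + ξ) * (m / 2)) := by nlinarith
  have : 3 * ρ * m / 4 - ξ * m ≤ (ρ + ξ) * (m / 2) := le_of_mul_le_mul_left (by linarith) hQpos
  nlinarith

theorem not_upperRegular_of_le_card (hKC : G.TutteBarrier K C)
    (hdeg : ∀ v, 3 * ρ * m / 4 ≤ (G.degree v : ℝ)) (hξ : 0 < ξ) (hξρ : 40 * ξ ≤ ρ)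
    (hm : 8 ≤ ρ * ξ * m) (hlarge : ∀ P ∈ C, ξ * m ≤ #P) : ¬ UpperRegular G ρ ξ := by
  intro hG
  have hρ : 0 < ρ := by linarith
  have hm0 : (0 : ℝ) < m := pos_of_mul_pos_right (by linarith) (mul_pos hρ hξ).le
  have hK : ξ * #K ≤ 1 := by
    have h₁ : #C * (ξ * m) ≤ m := by simpa using hKC.card_mul_le subset_rfl hlarge
    have h₂ : (#K : ℝ) + 2 ≤ #C := by exact_mod_cast hKC.card_add_two_le
    have h₃ : #C * ξ ≤ 1 := le_of_mul_le_mul_right (by linarith) hm0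
    nlinarith
  obtain ⟨P, hP, hPhalf⟩ := hKC.exists_two_mul_card_le
  have hPhalf : 2 * (#P : ℝ) ≤ m := by exact_mod_cast (Fintype.card_fin m ▸ hPhalf)
  have hPpos : (0 : ℝ) < #P := (mul_pos hξ hm0).trans_le (hlarge P hP)
  have hdegsum : #P * (3 * ρ * m / 4) ≤
      ∑ v ∈ P, (#{w ∈ P | G.Adj v w} : ℝ) + ∑ v ∈ P, (#{w ∈ K | G.Adj v w} : ℝ) := by
    rw [← sum_add_distrib]
    simpa using card_nsmul_le_sum P _ _ fun v hv => hKC.le_card_filter_adj hdeg hP hv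
  have hinside := hG.sum_card_filter_adj_le hρ.le hξ.le P
  have houtside : ∑ v ∈ P, (#{w ∈ K | G.Adj v w} : ℝ) ≤ #P * #K := by
    exact_mod_cast edgesBetween_eq_sum G P K ▸ edgesBetween_le_card_mul G P K
  have : 3 * ρ * m / 4 ≤ (ρ + ξ) * #P + 2 * ξ * m + #K := by
    refine le_of_mul_le_mul_left ?_ hPpos
    nlinarith
  have h₁ : ξ * ((ρ + ξ) * #P) ≤ ξ * ((ρ + ξ) * (m / 2)) := by gcongr; linarith
  have h₂ : ξ * (ξ * m) ≤ ρ * ξ * m / 40 := by nlinarith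
  nlinarith [mul_le_mul_of_nonneg_left this hξ.le]

end SimpleGraph.TutteBarrier

/-- An upper `(ρ, ξ)`-regular graph on an even number `m` of vertices with minimum degree at
least `3ρm/4` has a perfect matching. -/
theorem regular_graph_perfect_matching :
    ∀ ρ : ℝ, 0 < ρ → ρ ≤ 1 →
      ∃ ξ0 : ℝ, 0 < ξ0 ∧ ∀ ξ : ℝ, 0 < ξ → ξ ≤ ξ0 →
        ∃ m0 : ℕ, ∀ m : ℕ, m0 ≤ m → Even m →
          ∀ (G : SimpleGraph (Fin m)) [DecidableRel G.Adj],
            UpperRegular G ρ ξ →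
            (∀ v : Fin m, 3 * ρ * m / 4 ≤ (G.degree v : ℝ)) →
            ∃ M : SimpleGraph.Subgraph G, M.IsPerfectMatching := by
  intro ρ hρ _
  refine ⟨ρ / 40, by positivity, fun ξ hξ hξ₀ =>
    ⟨⌈8 / (ρ * ξ)⌉₊, fun m hm₀ hmeven G _ hG hdeg => ?_⟩⟩
  by_contra hno
  obtain ⟨K, C, hKC⟩ := SimpleGraph.exists_tutteBarrier (not_exists.1 hno) (by simpa using hmeven)
  have hm : 8 ≤ ρ * ξ * m := by
    have := (Nat.le_ceil _).trans (Nat.cast_le.2 hm₀ : (⌈8 / (ρ * ξ)⌉₊ : ℝ) ≤ m)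
    rwa [div_le_iff₀ (by positivity), mul_comm] at this
  have hξρ : 40 * ξ ≤ ρ := by linarith
  by_cases hsmall : ∃ P ∈ C, (#P : ℝ) < ξ * m
  · obtain ⟨P, hP, hPsmall⟩ := hsmall
    exact hKC.not_upperRegular_of_card_lt hdeg hξ hξρ hm hP hPsmall hG
  · push Not at hsmall
    exact hKC.not_upperRegular_of_le_card hdeg hξ hξρ hm hsmall hG
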